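/- Consider the integer program max{c^T x : Ax = b, l ≤ x ≤ u, x ∈ ℤ^n} with A ∈ ℤ^{m×n}, b ∈ ℤ^m, c ∈ ℤ^n and bounds l, u ∈ (ℤ ∪ {−∞, +∞})^n. Let z₀ be a feasible solution and z* a feasible solution with c^T z* > c^T z₀. Then there exist an element g of the Graver basis of A and a positive integer λ that is a power of two (λ = 2^i for some integer i ≥ 0) such that z₀ + λg is feasible and λ · c^T g ≥ c^T(z* − z₀) / (4n). -/

import Mathlib

/-- Two integer vectors are sign-compatible if they agree in sign componentwise. -/
def SignCompat {ι : Type*} (u v : ι → ℤ) : Prop := ∀ i, 0 ≤ u i * v i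

/-- A cycle of an integer matrix `A` is an integer vector in its kernel. -/
def IsCycle {R C : Type*} [Fintype C] (A : Matrix R C ℤ) (y : C → ℤ) : Prop :=
  A.mulVec y = 0

/-- The Graver basis of `A` consists of the nonzero cycles of `A` that cannot be
written as the sum of two sign-compatible nonzero cycles of `A`. -/
def InGraverBasis {R C : Type*} [Fintype C] (A : Matrix R C ℤ) (y : C → ℤ) : Prop :=
  IsCycle A y ∧ y ≠ 0 ∧
    ¬ ∃ u v : C → ℤ, IsCycle A u ∧ IsCycle A v ∧ u ≠ 0 ∧ v ≠ 0 ∧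
      SignCompat u v ∧ y = u + v

/-- The extended integers `ℤ ∪ {−∞, +∞}`, used for lower and upper bounds. -/
abbrev ZInf := WithBot (WithTop ℤ)

/-- The canonical embedding of `ℤ` into `ℤ ∪ {−∞, +∞}`. -/
def zc (x : ℤ) : ZInf := ((x : WithTop ℤ) : ZInf)

/-- A point `x ∈ ℤ^n` is feasible if `Ax = b` and `l ≤ x ≤ u` componentwise. -/
def IsFeasible {m n : ℕ} (A : Matrix (Fin m) (Fin n) ℤ) (b : Fin m → ℤ)
    (l u : Fin n → ZInf) (x : Fin n → ℤ) : Prop :=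
  A.mulVec x = b ∧ ∀ j, l j ≤ zc (x j) ∧ zc (x j) ≤ u j

/-!
Split `y = z* − z₀` repeatedly into sign-compatible cycles; since this lowers the `ℓ¹`-norm,
`y` becomes a sum of Graver basis elements conformal to `y`, i.e. each lying in the box between
`0` and `y`. Carathéodory's theorem in `ℚⁿ` turns this sum into `y = ∑ wⱼ gⱼ` with `wⱼ > 0` and
at most `n + 1` terms, so some term has `(n + 1) · wⱼ · cᵀgⱼ ≥ cᵀy`. As all terms of the sum lie
on the same side of `0` coordinatewise, `wⱼ gⱼ` stays in the box too, hence so does `λ gⱼ` for the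
largest power of two `λ ≤ max 1 wⱼ`, and `z₀ + λ gⱼ` is feasible. Finally `wⱼ < 2λ` gives
`λ · cᵀgⱼ ≥ cᵀy / (2(n + 1)) ≥ cᵀy / (4n)`.
-/

universe u

section Carathéodory

variable {𝕜 : Type*} {E : Type u} [Field 𝕜] [LinearOrder 𝕜] [IsStrictOrderedRing 𝕜]
  [AddCommGroup E] [Module 𝕜 E]

theorem average_mem_convexHull_of_list (L : List E) (hL : L ≠ []) :
    (L.length : 𝕜)⁻¹ • L.sum ∈ convexHull 𝕜 {x | x ∈ L} := by
  have hlen : (0 : 𝕜) < L.length := by exact_mod_cast List.length_pos_iff.2 hL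
  have := Finset.univ.centerMass_mem_convexHull (R := 𝕜) (w := fun _ : Fin L.length => 1)
    (by simp) (by simpa using hlen) (z := fun i => L[i.1]) (s := {x | x ∈ L})
    (fun i _ => List.getElem_mem _)
  simpa [Finset.centerMass, Fin.sum_univ_getElem] using this

/-- Conic form of Carathéodory's theorem, for sums of points rather than convex combinations. -/
theorem exists_pos_combination_of_mem_closure [FiniteDimensional 𝕜 E] {s : Set E} {x : E}
    (hx : x ∈ AddSubmonoid.closure s) :
    ∃ (ι : Type u) (_ : Fintype ι) (z : ι → E) (w : ι → 𝕜),
      Fintype.card ι ≤ Module.finrank 𝕜 E + 1 ∧ (∀ i, z i ∈ s ∧ 0 < w i) ∧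
      ∑ i, w i • z i = x := by
  obtain ⟨L, hLs, rfl⟩ := AddSubmonoid.exists_list_of_mem_closure hx
  rcases eq_or_ne L [] with rfl | hL
  · exact ⟨PEmpty, inferInstance, PEmpty.elim, PEmpty.elim, by simp, PEmpty.rec, by simp⟩
  obtain ⟨ι, _, z, w, hzL, hz, hw, -, hsum⟩ :=
    eq_pos_convex_span_of_mem_convexHull (average_mem_convexHull_of_list (𝕜 := 𝕜) L hL)
  have hlen : (L.length : 𝕜) ≠ 0 := by exact_mod_cast (List.length_pos_iff.2 hL).ne'
  refine ⟨ι, inferInstance, z, fun i => L.length * w i, ?_,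
    fun i => ⟨hLs _ (hzL ⟨i, rfl⟩), ?_⟩, ?_⟩
  · exact hz.card_le_finrank_succ.trans (Nat.succ_le_succ (Submodule.finrank_le _))
  · exact mul_pos (by exact_mod_cast List.length_pos_iff.2 hL) (hw i)
  · simp_rw [mul_smul, ← Finset.smul_sum, hsum, smul_inv_smul₀ hlen]

end Carathéodory

section OrderedField

variable {𝕜 : Type*} [Field 𝕜] [LinearOrder 𝕜] [IsStrictOrderedRing 𝕜]

theorem mul_mem_uIcc_zero_of_sum_eq {ι : Type*} [Fintype ι] {a w : ι → 𝕜} {s : 𝕜}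
    (ha : ∀ j, a j ∈ Set.uIcc 0 s) (hw : ∀ j, 0 ≤ w j) (hsum : ∑ j, w j * a j = s) (j : ι) :
    w j * a j ∈ Set.uIcc 0 s := by
  rcases le_total 0 s with hs | hs
  · simp only [Set.uIcc_of_le hs, Set.mem_Icc] at ha ⊢
    refine ⟨mul_nonneg (hw j) (ha j).1, hsum ▸ ?_⟩
    exact Finset.single_le_sum (fun k _ => mul_nonneg (hw k) (ha k).1) (Finset.mem_univ j)
  · simp only [Set.uIcc_of_ge hs, Set.mem_Icc] at ha ⊢
    refine ⟨hsum ▸ ?_, mul_nonpos_of_nonneg_of_nonpos (hw j) (ha j).2⟩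
    simpa using Finset.sum_le_sum_of_subset_of_nonpos' (Finset.subset_univ {j})
      fun k _ _ => mul_nonpos_of_nonneg_of_nonpos (hw k) (ha k).2

theorem mul_mem_uIcc_zero_of_le_max_one {a s μ t : 𝕜} (ha : a ∈ Set.uIcc 0 s)
    (hμa : μ * a ∈ Set.uIcc 0 s) (ht : 0 ≤ t) (htμ : t ≤ max 1 μ) : t * a ∈ Set.uIcc 0 s := by
  have hmax : max 1 μ * a ∈ Set.uIcc 0 s := by
    rcases max_choice 1 μ with h | h <;> rw [h]
    exacts [(one_mul a).symm ▸ ha, hμa]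
  refine Set.uIcc_subset_uIcc Set.left_mem_uIcc hmax ?_
  rcases le_total 0 a with ha0 | ha0
  · exact Set.mem_uIcc.2 (Or.inl ⟨mul_nonneg ht ha0, mul_le_mul_of_nonneg_right htμ ha0⟩)
  · exact Set.mem_uIcc.2
      (Or.inr ⟨mul_le_mul_of_nonpos_right htμ ha0, mul_nonpos_of_nonneg_of_nonpos ht ha0⟩)

theorem exists_two_pow_le_max_one_lt_two_mul [FloorSemiring 𝕜] (x : 𝕜) :
    ∃ k : ℕ, (2 : 𝕜) ^ k ≤ max 1 x ∧ x < 2 * 2 ^ k := by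
  refine ⟨Nat.log 2 ⌊x⌋₊, ?_, ?_⟩
  · rcases eq_or_ne ⌊x⌋₊ 0 with h | h
    · simp [h]
    · calc (2 : 𝕜) ^ Nat.log 2 ⌊x⌋₊ ≤ ⌊x⌋₊ := by exact_mod_cast Nat.pow_log_le_self 2 h
        _ ≤ x := Nat.floor_le (Nat.pos_of_floor_pos (Nat.pos_of_ne_zero h)).le
        _ ≤ max 1 x := le_max_right _ _
  · have := Nat.lt_pow_succ_log_self one_lt_two ⌊x⌋₊
    calc x < ⌊x⌋₊ + 1 := Nat.lt_floor_add_one x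
      _ ≤ 2 * 2 ^ Nat.log 2 ⌊x⌋₊ := by rw [← pow_succ']; exact_mod_cast this

theorem exists_two_pow_le_max_one_sum_div_le [FloorSemiring 𝕜] {ι : Type*} [Fintype ι]
    {w a : ι → 𝕜} {n : ℕ} (hn : 1 ≤ n) (hcard : Fintype.card ι ≤ n + 1) (hw : ∀ j, 0 ≤ w j)
    (hpos : 0 < ∑ j, w j * a j) :
    ∃ j, ∃ k : ℕ, (2 : 𝕜) ^ k ≤ max 1 (w j) ∧ (∑ j, w j * a j) / (4 * n) ≤ 2 ^ k * a j := by
  set S := ∑ j, w j * a j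
  obtain ⟨j, -, hj⟩ := Finset.exists_le_of_sum_le (f := fun _ => S)
    (g := fun j => Fintype.card ι * (w j * a j))
    (Finset.nonempty_of_sum_ne_zero hpos.ne') (by simp [S, ← Finset.mul_sum])
  obtain ⟨k, hk1, hk2⟩ := exists_two_pow_le_max_one_lt_two_mul (w j)
  have hwa : 0 < w j * a j := pos_of_mul_pos_right (hpos.trans_le hj) (Nat.cast_nonneg _)
  have ha : 0 < a j := pos_of_mul_pos_right hwa (hw j)
  have hcard' : (Fintype.card ι : 𝕜) ≤ n + 1 := by exact_mod_cast hcard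
  have hn' : (1 : 𝕜) ≤ n := by exact_mod_cast hn
  refine ⟨j, k, hk1, (div_le_iff₀ (by positivity)).2 ?_⟩
  calc S ≤ Fintype.card ι * (w j * a j) := hj
    _ ≤ (n + 1) * (2 * 2 ^ k * a j) := by gcongr
    _ = 2 ^ k * a j * (2 * n + 2) := by ring
    _ ≤ 2 ^ k * a j * (4 * n) := by gcongr; linarith

end OrderedField

theorem sum_mul_eq_sum_mul_sum_of_forall_sum_eq {ι C α : Type*} [Fintype ι] [Fintype C]
    [CommSemiring α] {c y : C → α} {g : ι → C → α} {w : ι → α}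
    (h : ∀ i, ∑ j, w j * g j i = y i) :
    ∑ i, c i * y i = ∑ j, w j * ∑ i, c i * g j i := by
  simp_rw [← h, Finset.mul_sum]
  rw [Finset.sum_comm]
  simp_rw [mul_left_comm]

theorem mem_uIcc_zero_add_of_mul_nonneg {α : Type*} [Ring α] [LinearOrder α]
    [IsStrictOrderedRing α] {a b : α} (h : 0 ≤ a * b) : a ∈ Set.uIcc 0 (a + b) := by
  rcases mul_nonneg_iff.1 h with ⟨ha, hb⟩ | ⟨ha, hb⟩
  · exact Set.mem_uIcc.2 (Or.inl ⟨ha, le_add_of_nonneg_right hb⟩)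
  · exact Set.mem_uIcc.2 (Or.inr ⟨add_le_of_nonpos_right hb, ha⟩)

theorem Int.natAbs_add_of_mul_nonneg {a b : ℤ} (h : 0 ≤ a * b) :
    (a + b).natAbs = a.natAbs + b.natAbs := by
  rcases mul_nonneg_iff.1 h with ⟨ha, hb⟩ | ⟨ha, hb⟩
  exacts [Int.natAbs_add_of_nonneg ha hb, Int.natAbs_add_of_nonpos ha hb]

theorem Int.cast_mem_uIcc_zero_iff {α : Type*} [Ring α] [LinearOrder α] [IsStrictOrderedRing α]
    {a c : ℤ} : (a : α) ∈ Set.uIcc 0 (c : α) ↔ a ∈ Set.uIcc 0 c := by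
  simp only [Set.mem_uIcc]
  norm_cast

section Graver

variable {R : Type*} {C : Type u}

def IsConformal (g y : C → ℤ) : Prop := ∀ i, g i ∈ Set.uIcc 0 (y i)

theorem IsConformal.trans {g u y : C → ℤ} (hgu : IsConformal g u) (huy : IsConformal u y) :
    IsConformal g y :=
  fun i => Set.uIcc_subset_uIcc Set.left_mem_uIcc (huy i) (hgu i)

theorem SignCompat.isConformal_left {u v : C → ℤ} (h : SignCompat u v) : IsConformal u (u + v) :=
  fun i => mem_uIcc_zero_add_of_mul_nonneg (h i)

theorem SignCompat.symm {u v : C → ℤ} (h : SignCompat u v) : SignCompat v u :=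
  fun i => mul_comm (u i) (v i) ▸ h i

theorem SignCompat.isConformal_right {u v : C → ℤ} (h : SignCompat u v) :
    IsConformal v (u + v) :=
  add_comm v u ▸ h.symm.isConformal_left

theorem isConformal_smul_of_le_max_one {ι : Type*} [Fintype ι] {g : ι → C → ℤ} {w : ι → ℚ}
    {y : C → ℤ} (hg : ∀ j, IsConformal (g j) y) (hw : ∀ j, 0 ≤ w j)
    (hsum : ∀ i, ∑ j, w j * g j i = y i) {j : ι} {t : ℕ} (ht : (t : ℚ) ≤ max 1 (w j)) :
    IsConformal ((t : ℤ) • g j) y := fun i => by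
  have hcast (k : ι) : (g k i : ℚ) ∈ Set.uIcc 0 (y i : ℚ) := Int.cast_mem_uIcc_zero_iff.2 (hg k i)
  rw [Pi.smul_apply, smul_eq_mul, ← Int.cast_mem_uIcc_zero_iff (α := ℚ), Int.cast_mul,
    Int.cast_natCast]
  exact mul_mem_uIcc_zero_of_le_max_one (hcast j)
    (mul_mem_uIcc_zero_of_sum_eq hcast hw (hsum i) j) (Nat.cast_nonneg t) ht

variable [Fintype C]

theorem sum_natAbs_pos {y : C → ℤ} (hy : y ≠ 0) : 0 < ∑ i, (y i).natAbs := by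
  obtain ⟨i, hi⟩ := Function.ne_iff.1 hy
  exact (Int.natAbs_pos.2 hi).trans_le
    (Finset.single_le_sum (f := fun i => (y i).natAbs) (fun _ _ => Nat.zero_le _)
      (Finset.mem_univ i))

theorem mem_closure_graver_isConformal (A : Matrix R C ℤ) {y : C → ℤ} (hy : IsCycle A y) :
    y ∈ AddSubmonoid.closure {g | InGraverBasis A g ∧ IsConformal g y} := by
  induction hN : ∑ i, (y i).natAbs using Nat.strong_induction_on generalizing y with
  | _ N ih =>
  by_cases hG : InGraverBasis A y
  · exact AddSubmonoid.subset_closure ⟨hG, fun i => Set.right_mem_uIcc⟩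
  rcases eq_or_ne y 0 with rfl | hy0
  · exact zero_mem _
  obtain ⟨u, v, hu, hv, hu0, hv0, huv, rfl⟩ : ∃ u v : C → ℤ, IsCycle A u ∧ IsCycle A v ∧
      u ≠ 0 ∧ v ≠ 0 ∧ SignCompat u v ∧ y = u + v := by
    simpa [InGraverBasis, hy, hy0] using hG
  have hnorm : ∑ i, ((u + v) i).natAbs = ∑ i, (u i).natAbs + ∑ i, (v i).natAbs := by
    simp_rw [Pi.add_apply, Int.natAbs_add_of_mul_nonneg (huv _), Finset.sum_add_distrib]
  have hclosure {w : C → ℤ} (hw : IsConformal w (u + v)) :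
      AddSubmonoid.closure {g | InGraverBasis A g ∧ IsConformal g w} ≤
        AddSubmonoid.closure {g | InGraverBasis A g ∧ IsConformal g (u + v)} :=
    AddSubmonoid.closure_mono fun g hg => ⟨hg.1, hg.2.trans hw⟩
  have := sum_natAbs_pos hu0
  have := sum_natAbs_pos hv0
  exact add_mem (hclosure huv.isConformal_left (ih _ (by omega) hu rfl))
    (hclosure huv.isConformal_right (ih _ (by omega) hv rfl))

theorem exists_graver_combination (A : Matrix R C ℤ) {y : C → ℤ} (hy : IsCycle A y) :
    ∃ (ι : Type u) (_ : Fintype ι) (g : ι → C → ℤ) (w : ι → ℚ),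
      Fintype.card ι ≤ Fintype.card C + 1 ∧
      (∀ j, InGraverBasis A (g j) ∧ IsConformal (g j) y ∧ 0 < w j) ∧
      ∀ i, ∑ j, w j * g j i = y i := by
  let cast : (C → ℤ) →+ (C → ℚ) := (Int.castAddHom ℚ).compLeft C
  have hx :
      cast y ∈ AddSubmonoid.closure (cast '' {g | InGraverBasis A g ∧ IsConformal g y}) := by
    rw [← AddMonoidHom.map_mclosure]
    exact AddSubmonoid.mem_map_of_mem cast (mem_closure_graver_isConformal A hy)
  obtain ⟨ι, _, z, w, hcard, hz, hsum⟩ := exists_pos_combination_of_mem_closure (𝕜 := ℚ) hx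
  choose g hg hgz using fun j => (hz j).1
  refine ⟨ι, inferInstance, g, w, by simpa [Module.finrank_fintype_fun_eq_card] using hcard,
    fun j => ⟨(hg j).1, (hg j).2, (hz j).2⟩, fun i => ?_⟩
  simpa [← hgz, cast] using congrFun hsum i

end Graver

theorem zc_monotone : Monotone zc :=
  fun _ _ h => WithBot.coe_le_coe.2 (WithTop.coe_le_coe.2 h)

theorem IsFeasible.add_of_isConformal {m n : ℕ} {A : Matrix (Fin m) (Fin n) ℤ} {b : Fin m → ℤ}
    {l u : Fin n → ZInf} {z0 zs g : Fin n → ℤ} (h0 : IsFeasible A b l u z0)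
    (hs : IsFeasible A b l u zs) (hg : IsCycle A g) (hconf : IsConformal g (zs - z0)) :
    IsFeasible A b l u (z0 + g) := by
  refine ⟨by rw [Matrix.mulVec_add, h0.1, hg, add_zero], fun j => ?_⟩
  rcases Set.mem_uIcc.1 (hconf j) with ⟨h1, h2⟩ | ⟨h1, h2⟩ <;> simp only [Pi.sub_apply] at h1 h2
  · exact ⟨(h0.2 j).1.trans (zc_monotone (by simpa using h1)),
      (zc_monotone (by simp; linarith)).trans (hs.2 j).2⟩
  · exact ⟨(hs.2 j).1.trans (zc_monotone (by simp; linarith)),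
      (zc_monotone (by simpa using h2)).trans (h0.2 j).2⟩

/-- For feasible solutions `z₀, z*` with `cᵀz* > cᵀz₀`, there are a Graver basis
element `g` of `A` and a positive integer `λ` such that `z₀ + λg` is feasible
and `λ · cᵀg ≥ cᵀ(z* − z₀)/(4n)`, where `λ` is a power of two. -/
theorem augmenting_graver_step_pow_two (m n : ℕ)
    (A : Matrix (Fin m) (Fin n) ℤ) (b : Fin m → ℤ) (c : Fin n → ℤ)
    (l u : Fin n → ZInf)
    (z0 zs : Fin n → ℤ)
    (hz0 : IsFeasible A b l u z0) (hzs : IsFeasible A b l u zs)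
    (hlt : ∑ i, c i * z0 i < ∑ i, c i * zs i) :
    ∃ (g : Fin n → ℤ) (lam : ℕ), InGraverBasis A g ∧ 0 < lam ∧
      (∃ i : ℕ, lam = 2 ^ i) ∧
      IsFeasible A b l u (z0 + (lam : ℤ) • g) ∧
      ((∑ i, c i * (zs i - z0 i) : ℤ) : ℚ) / (4 * (n : ℚ)) ≤
        (lam : ℚ) * ((∑ i, c i * g i : ℤ) : ℚ) := by
  have hn : 1 ≤ n := Nat.one_le_iff_ne_zero.2 (by rintro rfl; simp at hlt)
  have hy : IsCycle A (zs - z0) := by rw [IsCycle, Matrix.mulVec_sub, hzs.1, hz0.1, sub_self]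
  obtain ⟨ι, _, g, w, hcard, hg, hsum⟩ := exists_graver_combination A hy
  have hcost :
      ((∑ i, c i * (zs i - z0 i) : ℤ) : ℚ) = ∑ j, w j * ((∑ i, c i * g j i : ℤ) : ℚ) := by
    simpa using sum_mul_eq_sum_mul_sum_of_forall_sum_eq (c := fun i => (c i : ℚ)) hsum
  have hpos : (0 : ℚ) < ∑ j, w j * ((∑ i, c i * g j i : ℤ) : ℚ) := by
    rw [← hcost, Int.cast_pos]
    simpa [mul_sub, Finset.sum_sub_distrib] using hlt
  obtain ⟨j, k, hk, hjk⟩ := exists_two_pow_le_max_one_sum_div_le hn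
    (by simpa using hcard) (fun j => (hg j).2.2.le) hpos
  refine ⟨g j, 2 ^ k, (hg j).1, by positivity, ⟨k, rfl⟩, hz0.add_of_isConformal hzs ?_ ?_, ?_⟩
  · rw [IsCycle, Matrix.mulVec_smul, (hg j).1.1, smul_zero]
  · exact isConformal_smul_of_le_max_one (fun j => (hg j).2.1) (fun j => (hg j).2.2.le) hsum
      (by exact_mod_cast hk)
  · rw [hcost]
    exact_mod_cast hjk
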